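/- Let G be the time-invariant dynamic Bayesian network DAG of the environment and suppose the joint distribution of the variables satisfies the global Markov condition and faithfulness with respect to G. Define the minimal latent state set g_t^min ⊆ g_t by: g_{i,t} ∈ g_t^min if and only if c_i^{g→r} = 1 or g_{i,t} has a directed path in G to a future reward r_{t+k} (for some k > 0) passing through other latent state components. Then g_t^min is a minimal and sufficient representation for policy learning: (i) every latent component g_{i,t} ∉ g_t^min is conditionally independent of every future reward r_{t+k} (k > 0) given g_t^min and the action a_t, and (ii) no proper subset of g_t^min has this property, i.e., for every g_{i,t} ∈ g_t^min there exists k > 0 such that g_{i,t} is conditionally dependent on r_{t+k} given g_t^min \ {g_{i,t}} and a_t. -/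

import Mathlib

open Relation

/-- Nodes of the time-invariant dynamic Bayesian network: latent state
components `g_{i,t}`, actions `a_t`, and rewards `r_t`. -/
inductive DBNNode (d : ℕ) : Type where
  | latent (i : Fin d) (t : ℕ)
  | action (t : ℕ)
  | reward (t : ℕ)
deriving DecidableEq

/-- The fixed binary structural masks of the DBN.  `cgg i j = true` encodes the
edge `g_{j,t-1} → g_{i,t}`, `cag i` the edge `a_{t-1} → g_{i,t}`, `cgr i` the
edge `g_{i,t-1} → r_t`, and `car` the edge `a_{t-1} → r_t`. -/
structure DBNMasks (d : ℕ) where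
  cgg : Fin d → Fin d → Bool
  cag : Fin d → Bool
  cgr : Fin d → Bool
  car : Bool

/-- The directed edges of the time-invariant DBN graph `G`. -/
def DBNEdge {d : ℕ} (c : DBNMasks d) : DBNNode d → DBNNode d → Prop
  | .latent j t, .latent i t' => t' = t + 1 ∧ c.cgg i j = true
  | .action t, .latent i t' => t' = t + 1 ∧ c.cag i = true
  | .latent i t, .reward t' => t' = t + 1 ∧ c.cgr i = true
  | .action t, .reward t' => t' = t + 1 ∧ c.car = true
  | _, _ => False

/-- Undirected adjacency induced by a directed edge relation. -/
def Adj {V : Type*} (E : V → V → Prop) (x y : V) : Prop := E x y ∨ E y x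

/-- `p` is a (simple, undirected) path in the graph with edge relation `E`:
consecutive nodes are adjacent and no node repeats. -/
def IsPathList {V : Type*} (E : V → V → Prop) (p : List V) : Prop :=
  p.Chain' (Adj E) ∧ p.Nodup

/-- A path `p` is blocked by the conditioning set `Z`: it contains a
chain `u → m → v` (in either direction) or a fork `u ← m → v` with middle
node `m ∈ Z`, or a collider `u → m ← v` with `m ∉ Z` and no descendant of
`m` in `Z`. -/
def BlockedBy {V : Type*} (E : V → V → Prop) (Z : Set V) (p : List V) : Prop :=
  ∃ u m v : V, [u, m, v] <:+: p ∧
    ((((E u m ∧ E m v) ∨ (E v m ∧ E m u) ∨ (E m u ∧ E m v)) ∧ m ∈ Z) ∨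
      ((E u m ∧ E v m) ∧ m ∉ Z ∧ ∀ w : V, Relation.TransGen E m w → w ∉ Z))

/-- `Z` d-separates `X` from `Y` in the graph with edge relation `E`: every
path between a node of `X` and a node of `Y` is blocked by `Z`. -/
def DSep {V : Type*} (E : V → V → Prop) (X Y Z : Set V) : Prop :=
  ∀ x ∈ X, ∀ y ∈ Y, ∀ p : List V,
    IsPathList E p → p.head? = some x → p.getLast? = some y → BlockedBy E Z p

/-- The joint distribution (represented abstractly by its ternary conditional
independence relation `CI X Y Z`, "X ⫫ Y given Z") satisfies the global Markov
condition w.r.t. the graph: d-separation implies conditional independence. -/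
def GlobalMarkov {V : Type*} (E : V → V → Prop)
    (CI : Set V → Set V → Set V → Prop) : Prop :=
  ∀ X Y Z : Set V, Disjoint X Y → Disjoint X Z → Disjoint Y Z →
    DSep E X Y Z → CI X Y Z

/-- The joint distribution is faithful to the graph: every conditional
independence corresponds to a d-separation. -/
def FaithfulTo {V : Type*} (E : V → V → Prop)
    (CI : Set V → Set V → Set V → Prop) : Prop :=
  ∀ X Y Z : Set V, Disjoint X Y → Disjoint X Z → Disjoint Y Z →
    CI X Y Z → DSep E X Y Z

/-- `g_{i,t} ∈ g_t^min` iff `c_i^{g→r} = 1` or `g_{i,t}` has a directed path in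
`G` to a future reward `r_{t+k}` (some `k > 0`) passing through other latent
state components. -/
def InMinSet {d : ℕ} (c : DBNMasks d) (i : Fin d) (t : ℕ) : Prop :=
  c.cgr i = true ∨
    ∃ k : ℕ, 0 < k ∧ ∃ (j : Fin d) (s : ℕ),
      Relation.TransGen (DBNEdge c) (DBNNode.latent i t) (DBNNode.latent j s) ∧
      Relation.TransGen (DBNEdge c) (DBNNode.latent j s) (DBNNode.reward (t + k))

/-- The minimal latent state set `g_t^min`, as a set of nodes of `G`. -/
def MinSet {d : ℕ} (c : DBNMasks d) (t : ℕ) : Set (DBNNode d) :=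
  {n | ∃ i : Fin d, n = DBNNode.latent i t ∧ InMinSet c i t}

/-! Every edge of `G` goes from time `s` to time `s + 1`, so time is a layering of `G` and the
conditioning sets of the theorem lie in the single layer `t`.

(ii) A directed path from `g_{i,t}` to a reward meets only nodes later than `t` after its start,
so it has no collider and no non-collider in the conditioning set; faithfulness turns this open
path into a dependence.

(i) Follow a path from `g_{i,t}` to `r_{t+k}` from its start. Once it climbs above layer `t` it
either turns back down, creating a collider above layer `t` (which blocks, as no descendant of it
lies in layer `t`), or runs directed to the reward. In the latter case the node where it leaves
layer `t` for the last time is an action or a latent ancestor of the reward, i.e. a node of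
`g_t^min ∪ {a_t}`, and it is not a collider; it is not `g_{i,t}` itself, since `g_{i,t}` is not
an ancestor of a reward. So the path is blocked and the Markov condition applies. -/

section Layering

variable {V : Type*} {E : V → V → Prop} {τ : V → ℕ}

def IsLayering (E : V → V → Prop) (τ : V → ℕ) : Prop :=
  ∀ ⦃x y : V⦄, E x y → τ y = τ x + 1

theorem BlockedBy.cons {Z : Set V} {p : List V} (h : BlockedBy E Z p) (a : V) :
    BlockedBy E Z (a :: p) := by
  obtain ⟨u, m, v, hp, hblock⟩ := h
  exact ⟨u, m, v, hp.trans (List.suffix_cons a p).isInfix, hblock⟩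

theorem blockedBy_of_mem {Z : Set V} {p : List V} {u m v : V} (hp : [u, m, v] <:+: p)
    (hum : Adj E u m) (hmv : E m v) (hm : m ∈ Z) : BlockedBy E Z p :=
  ⟨u, m, v, hp, Or.inl ⟨hum.elim (fun h => Or.inl ⟨h, hmv⟩) (fun h => Or.inr (Or.inr ⟨h, hmv⟩)),
    hm⟩⟩

namespace IsLayering

theorem lt_of_transGen (hE : IsLayering E τ) {x y : V} (h : TransGen E x y) : τ x < τ y := by
  induction h with
  | single h => simp [hE h]
  | tail _ h _ => rw [hE h]; omega

theorem edge_of_adj (hE : IsLayering E τ) {x y : V} (h : Adj E x y) (hxy : τ x < τ y) :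
    E x y :=
  h.resolve_right fun h' => by have := hE h'; omega

variable {Z : Set V} {t : ℕ}

theorem blockedBy_of_collider (hE : IsLayering E τ) (hZ : ∀ z ∈ Z, τ z ≤ t) {p : List V}
    {u m v : V} (hp : [u, m, v] <:+: p) (hum : E u m) (hvm : E v m) (hm : t < τ m) :
    BlockedBy E Z p :=
  ⟨u, m, v, hp, Or.inr ⟨⟨hum, hvm⟩, fun h => by have := hZ m h; omega,
    fun w hw hwZ => by have := hE.lt_of_transGen hw; have := hZ w hwZ; omega⟩⟩

theorem blockedBy_or_isChain_of_edge (hE : IsLayering E τ) (hZ : ∀ z ∈ Z, τ z ≤ t) :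
    ∀ {u m : V} {l : List V}, (m :: l).IsChain (Adj E) → E u m → t < τ m →
      BlockedBy E Z (u :: m :: l) ∨ (u :: m :: l).IsChain E
  | _, m, [], _, hum, _ => Or.inr (.cons_cons hum (.singleton m))
  | u, _, v :: l, hl, hum, hm => by
    rw [List.isChain_cons_cons] at hl
    rcases hl.1 with hmv | hvm
    · rcases blockedBy_or_isChain_of_edge hE hZ hl.2 hmv (by rw [hE hmv]; omega) with h | h
      · exact Or.inl (h.cons u)
      · exact Or.inr (.cons_cons hum h)
    · exact Or.inl (hE.blockedBy_of_collider hZ ⟨[], l, rfl⟩ hum hvm hm)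

theorem blockedBy_or_isChain_of_le (hE : IsLayering E τ) (hZ : ∀ z ∈ Z, τ z ≤ t) {y : V}
    (hanc : ∀ w, τ w = t → TransGen E w y → w ∈ Z) (hy : t < τ y) :
    ∀ {a : V} {l : List V}, (a :: l).IsChain (Adj E) →
      (a :: l).getLast (List.cons_ne_nil a l) = y → τ a ≤ t →
      BlockedBy E Z (a :: l) ∨ (τ a = t ∧ (a :: l).IsChain E)
  | _, [], _, rfl, ha => absurd ha (by omega)
  | a, b :: l, hl, hlast, ha => by
    rw [List.isChain_cons_cons] at hl
    rw [List.getLast_cons_cons] at hlast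
    by_cases hb : τ b ≤ t
    · left
      rcases blockedBy_or_isChain_of_le hE hZ hanc hy hl.2 hlast hb with h | ⟨hbt, hchain⟩
      · exact h.cons a
      cases l with
      | nil => rw [List.getLast_singleton] at hlast; subst hlast; omega
      | cons c l =>
        rw [List.isChain_cons_cons] at hchain
        rw [List.getLast_cons_cons] at hlast
        have hby : TransGen E b y :=
          .head' hchain.1 (List.relationReflTransGen_of_exists_isChain_cons l hchain.2 hlast)
        exact blockedBy_of_mem ⟨[], l, rfl⟩ hl.1 hchain.1 (hanc b hbt hby)
    · have hab : E a b := hE.edge_of_adj hl.1 (by omega)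
      have hat : τ a = t := by rw [hE hab] at hb; omega
      exact (hE.blockedBy_or_isChain_of_edge hZ hl.2 hab (by omega)).imp_right (⟨hat, ·⟩)

theorem dSep_of_not_transGen (hE : IsLayering E τ) (hZ : ∀ z ∈ Z, τ z ≤ t) {x y : V}
    (hanc : ∀ w, τ w = t → TransGen E w y → w ∈ Z) (hx : ¬ TransGen E x y) (hxt : τ x ≤ t)
    (hy : t < τ y) : DSep E {x} {y} Z := by
  intro x' hx' y' hy' p hp hhead hlast
  rw [Set.mem_singleton_iff] at hx' hy'
  subst x' y'
  obtain ⟨l, rfl⟩ : ∃ l, p = x :: l := List.head?_eq_some_iff.1 hhead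
  rw [List.getLast?_eq_some_getLast (List.cons_ne_nil _ _), Option.some.injEq] at hlast
  refine (hE.blockedBy_or_isChain_of_le hZ hanc hy hp.1 hlast hxt).resolve_right ?_
  rintro ⟨-, hchain⟩
  have hxy : x ≠ y := by rintro rfl; omega
  exact hx ((reflTransGen_iff_eq_or_transGen.1
    (List.relationReflTransGen_of_exists_isChain_cons l hchain hlast)).resolve_left hxy.symm)

theorem not_dSep_of_transGen (hE : IsLayering E τ) {x y : V} (hZ : ∀ z ∈ Z, τ z ≤ τ x)
    (h : TransGen E x y) : ¬ DSep E {x} {y} Z := by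
  obtain ⟨l, hchain, hlast⟩ := List.exists_isChain_cons_of_relationReflTransGen h.to_reflTransGen
  have hsorted : ((x :: l).map τ).Pairwise (· < ·) :=
    List.isChain_iff_pairwise.1 <| List.isChain_map τ |>.2 <| hchain.imp fun a b hab => by
      rw [hE hab]; omega
  have hpath : IsPathList E (x :: l) :=
    ⟨hchain.imp fun _ _ => Or.inl, List.Nodup.of_map τ (hsorted.imp ne_of_lt)⟩
  have hlate : ∀ u ∈ x :: l, τ x ≤ τ u := by
    simp only [List.map_cons, List.pairwise_cons, List.mem_map] at hsorted
    rintro u (_ | ⟨_, hu⟩)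
    exacts [le_rfl, (hsorted.1 _ ⟨u, hu, rfl⟩).le]
  intro hsep
  obtain ⟨u, m, v, hinf, hblock⟩ := hsep x rfl y rfl (x :: l) hpath rfl
    (by rw [List.getLast?_eq_some_getLast (List.cons_ne_nil _ _), hlast])
  obtain ⟨hum, hmv⟩ : E u m ∧ E m v := by
    simpa [List.isChain_cons_cons] using hchain.infix hinf
  have hu := hlate u (hinf.subset (by simp))
  rcases hblock with ⟨-, hmZ⟩ | ⟨⟨-, hvm⟩, -⟩
  · have := hZ m hmZ; have := hE hum; omega
  · have := hE hmv; have := hE hvm; omega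

end IsLayering

end Layering

namespace DBNNode

variable {d : ℕ}

def time : DBNNode d → ℕ
  | .latent _ t => t
  | .action t => t
  | .reward t => t

end DBNNode

section DBN

variable {d : ℕ} {c : DBNMasks d}

theorem isLayering_dbnEdge (c : DBNMasks d) : IsLayering (DBNEdge c) DBNNode.time := by
  intro x y h
  cases x <;> cases y <;> simp_all [DBNEdge, DBNNode.time]

theorem not_dbnEdge_action {x : DBNNode d} {s : ℕ} : ¬ DBNEdge c x (.action s) := by
  cases x <;> simp [DBNEdge]

theorem not_transGen_dbnEdge_reward {y : DBNNode d} {s : ℕ} :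
    ¬ TransGen (DBNEdge c) (.reward s) y := fun h => by
  obtain ⟨_, h, -⟩ := TransGen.head'_iff.1 h
  cases ‹DBNNode d› <;> simp [DBNEdge] at h

theorem inMinSet_iff_exists_transGen_reward {i : Fin d} {t : ℕ} :
    InMinSet c i t ↔ ∃ k, 0 < k ∧ TransGen (DBNEdge c) (.latent i t) (.reward (t + k)) := by
  constructor
  · rintro (h | ⟨k, hk, j, s, h₁, h₂⟩)
    exacts [⟨1, one_pos, .single ⟨rfl, h⟩⟩, ⟨k, hk, h₁.trans h₂⟩]
  · rintro ⟨k, hk, h⟩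
    obtain ⟨w, hw, hwr⟩ := TransGen.tail'_iff.1 h
    rcases reflTransGen_iff_eq_or_transGen.1 hw with rfl | hw
    · exact Or.inl hwr.2
    cases w with
    | latent j s => exact Or.inr ⟨k, hk, j, s, hw, .single hwr⟩
    | action s =>
      obtain ⟨_, -, h⟩ := TransGen.tail'_iff.1 hw
      exact absurd h not_dbnEdge_action
    | reward s => exact absurd hwr (by simp [DBNEdge])

theorem time_eq_of_mem_minSet_union {t : ℕ} {z : DBNNode d}
    (hz : z ∈ MinSet c t ∪ {.action t}) : z.time = t := by
  rcases hz with ⟨i, rfl, -⟩ | rfl <;> rfl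

theorem mem_minSet_union_of_transGen_reward {t k : ℕ} {w : DBNNode d} (hw : w.time = t)
    (h : TransGen (DBNEdge c) w (.reward (t + k))) : w ∈ MinSet c t ∪ {.action t} := by
  cases w with
  | latent j s =>
    cases hw
    exact Or.inl ⟨j, rfl, inMinSet_iff_exists_transGen_reward.2 ⟨k, by
      simpa [DBNNode.time] using (isLayering_dbnEdge c).lt_of_transGen h, h⟩⟩
  | action s => exact Or.inr (congrArg DBNNode.action hw)
  | reward s => exact absurd h not_transGen_dbnEdge_reward

end DBN

/-- **Minimal sufficient representations for policy learning.**  Under the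
global Markov condition and faithfulness, (i) every latent component not in
`g_t^min` is conditionally independent of every future reward `r_{t+k}` given
`g_t^min` and `a_t`, and (ii) every member of `g_t^min` is conditionally
dependent on some future reward given `g_t^min \ {g_{i,t}}` and `a_t`. -/
theorem minimal_sufficient_representation (d : ℕ) (c : DBNMasks d)
    (CI : Set (DBNNode d) → Set (DBNNode d) → Set (DBNNode d) → Prop)
    (hMarkov : GlobalMarkov (DBNEdge c) CI)
    (hFaithful : FaithfulTo (DBNEdge c) CI) (t : ℕ) :
    (∀ i : Fin d, ¬ InMinSet c i t → ∀ k : ℕ, 0 < k →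
      CI {DBNNode.latent i t} {DBNNode.reward (t + k)}
        (MinSet c t ∪ {DBNNode.action t})) ∧
    (∀ i : Fin d, InMinSet c i t → ∃ k : ℕ, 0 < k ∧
      ¬ CI {DBNNode.latent i t} {DBNNode.reward (t + k)}
        ((MinSet c t \ {DBNNode.latent i t}) ∪ {DBNNode.action t})) := by
  have hE := isLayering_dbnEdge c
  refine ⟨fun i hi k hk => ?_, fun i hi => ?_⟩
  · refine hMarkov _ _ _ (by simp) (by simp [MinSet, hi]) (by simp [MinSet]) ?_
    refine hE.dSep_of_not_transGen (fun z hz => (time_eq_of_mem_minSet_union hz).le)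
      (fun w hw => mem_minSet_union_of_transGen_reward hw) ?_ le_rfl
      (by simp [DBNNode.time, hk])
    exact fun h => hi (inMinSet_iff_exists_transGen_reward.2 ⟨k, hk, h⟩)
  · obtain ⟨k, hk, hreach⟩ := inMinSet_iff_exists_transGen_reward.1 hi
    refine ⟨k, hk, fun hCI => hE.not_dSep_of_transGen ?_ hreach
      (hFaithful _ _ _ (by simp) (by simp) (by simp [MinSet]) hCI)⟩
    exact fun z hz => (time_eq_of_mem_minSet_union (hz.imp_left And.left)).le
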